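/- Let H be a seminormal C-monoid, and suppose the set of idempotents of C*(H,F) is {e₀ = [1], ..., e_n} with e₀ + ... + e_n = e_n. Then e_n lies in C_H = {[a] : a ∈ H}, provided every class of C*(H,F) contains a prime element of F and H is dense in F. -/
import Mathlib


/-- The factorial monoid `F = F^× × ℱ(P)`, with unit group `Fu` and free
abelian monoid `ℱ(P)` modeled by `Multiplicative (P →₀ ℕ)`. -/
abbrev FM (Fu P : Type*) [CommGroup Fu] : Type _ := Fu × Multiplicative (P →₀ ℕ)

/-- `H`-equivalence on `F`: `y ~ y'` iff for all `x ∈ F`, `x*y ∈ H ↔ x*y' ∈ H`. -/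
def HRel {M : Type*} [CommMonoid M] (H : Submonoid M) (y y' : M) : Prop :=
  ∀ x : M, x * y ∈ H ↔ x * y' ∈ H

/-- `y ∈ (F \ F^×) ∪ {1}`: the representatives of the reduced class semigroup. -/
def NU1 {M : Type*} [Monoid M] (y : M) : Prop := ¬ IsUnit y ∨ y = 1

/-- The reduced class semigroup `C*(H,F)` is finite: there are finitely many
`H`-equivalence classes of elements of `(F \ F^×) ∪ {1}`. -/
def CStarFinite {M : Type*} [CommMonoid M] (H : Submonoid M) : Prop :=
  ∃ (n : ℕ) (f : Fin n → M), ∀ y : M, NU1 y → ∃ i : Fin n, HRel H y (f i)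

/-- `C*(H,F)` is a union of groups: each class `[y]` lies in some subgroup,
i.e. in the constituent group of some idempotent `[e]`: `[e] + [e] = [e]`,
`[y] + [e] = [y]` and `[y] + [z] = [e]` for some class `[z]`. -/
def CStarUnionOfGroups {M : Type*} [CommMonoid M] (H : Submonoid M) : Prop :=
  ∀ y : M, NU1 y → ∃ e : M, NU1 e ∧ HRel H (e * e) e ∧ HRel H (y * e) y ∧
    ∃ z : M, NU1 z ∧ HRel H (y * z) e

/-- `H^× = H ∩ F^×`: every element of `H` which is invertible in `F` has its
inverse in `H`. -/
def UnitsCond {M : Type*} [Monoid M] (H : Submonoid M) : Prop :=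
  ∀ u : Mˣ, (u : M) ∈ H → ((u⁻¹ : Mˣ) : M) ∈ H

/-- `H` is seminormal: for `x = a/b ∈ q(H)` (`a, b ∈ H`) with `x^n ∈ H` for all
sufficiently large `n` (i.e. `a^n = h_n * b^n` with `h_n ∈ H`), one has `x ∈ H`
(i.e. `a = h * b` with `h ∈ H`). -/
def SeminormalSub {M : Type*} [CommMonoid M] (H : Submonoid M) : Prop :=
  ∀ a b : M, a ∈ H → b ∈ H → (∃ m : ℕ, ∀ n ≥ m, ∃ h ∈ H, a ^ n = h * b ^ n) →
    ∃ h ∈ H, a = h * b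

/-- The prime element of `F = F^× × ℱ(P)` corresponding to `p ∈ P`. -/
noncomputable def primeElt {Fu P : Type*} [CommGroup Fu] (p : P) : FM Fu P :=
  (1, Multiplicative.ofAdd (Finsupp.single p 1))

/-- `H` is dense in `F`: for every prime `p` of `F`, the set
`v_p(H) ⊆ ℕ₀` of `p`-adic values of elements of `H` is a numerical monoid,
i.e. has finite complement in `ℕ₀`. -/
def DenseSub {Fu P : Type*} [CommGroup Fu] (H : Submonoid (FM Fu P)) : Prop :=
  ∀ p : P, {k : ℕ | ∀ a ∈ H, Multiplicative.toAdd a.2 p ≠ k}.Finite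

namespace StmtAux
variable {M : Type*} [CommMonoid M] (H : Submonoid M)

theorem hrel_refl (y : M) : HRel H y y := fun _ => Iff.rfl

theorem hrel_symm {y y' : M} (h : HRel H y y') : HRel H y' y := fun x => (h x).symm

theorem hrel_trans {y y' y'' : M} (h : HRel H y y') (h' : HRel H y' y'') :
    HRel H y y'' := fun x => (h x).trans (h' x)

theorem hrel_mul_right {y y' : M} (h : HRel H y y') (z : M) :
    HRel H (y * z) (y' * z) := by
  intro x
  simpa [mul_assoc, mul_comm, mul_left_comm] using h (x * z)

theorem hrel_pow_period (a : M) (i d : ℕ) (h : HRel H (a ^ i) (a ^ (i + d))) :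
    ∀ t : ℕ, HRel H (a ^ i) (a ^ (i + t * d)) := by
  intro t
  induction t with
  | zero => simpa using hrel_refl H (a ^ i)
  | succ t ih =>
      have h1 : HRel H (a ^ (i + t * d) * a ^ d) (a ^ i * a ^ d) :=
        hrel_mul_right H (hrel_symm H ih) (a ^ d)
      rw [← pow_add, ← pow_add] at h1
      have e : i + (t + 1) * d = i + t * d + d := by ring
      rw [e]
      exact hrel_trans H h (hrel_symm H h1)

end StmtAux

/-- Let `H ⊆ F` be a dense seminormal C-monoid such that every class of
`C*(H,F)` contains a prime element of `F`.  If `b` represents the smallest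
idempotent `eₙ` of `C*(H,F)` (i.e. `[b]` is idempotent and absorbs every
idempotent class, which is equivalent to `e₀ + ... + eₙ = eₙ`), then
`eₙ ∈ C_H = {[a] : a ∈ H}`. -/
theorem stmt_16 {Fu P : Type*} [CommGroup Fu] (H : Submonoid (FM Fu P))
    (hux : UnitsCond H) (hfin : CStarFinite H) (hsn : SeminormalSub H)
    (hdense : DenseSub H)
    (hprimes : ∀ y : FM Fu P, NU1 y → ∃ p : P, HRel H y (primeElt p))
    (b : FM Fu P) (hb : NU1 b) (hbid : HRel H (b * b) b)
    (hbmin : ∀ c : FM Fu P, NU1 c → HRel H (c * c) c → HRel H (b * c) b) :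
    ∃ a ∈ H, HRel H a b := by
  classical
  open StmtAux in
  -- choose a prime class representative for b
  obtain ⟨p, hbQ⟩ := hprimes b hb
  set Q : FM Fu P := primeElt p with hQdef
  -- valuation at p
  set v : FM Fu P → ℕ := fun x => Multiplicative.toAdd x.2 p with hvdef
  have hvmul : ∀ x y : FM Fu P, v (x * y) = v x + v y := by
    intro x y
    simp [hvdef, Finsupp.add_apply]
  have hvpow : ∀ (x : FM Fu P) (j : ℕ), v (x ^ j) = j * v x := by
    intro x j
    induction j with
    | zero => simp [hvdef]
    | succ j ih => rw [pow_succ, hvmul, ih]; ring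
  have hvQ : v Q = 1 := by simp [hvdef, hQdef, primeElt]
  have hnu : ∀ x : FM Fu P, v x ≠ 0 → ¬ IsUnit x := by
    intro x hx hux'
    obtain ⟨u, rfl⟩ := hux'
    have h1 : v ((u : FM Fu P) * ((u⁻¹ : (FM Fu P)ˣ) : FM Fu P)) = 0 := by
      simp [hvdef]
    rw [hvmul] at h1
    omega
  have hnu1 : ∀ x : FM Fu P, v x ≠ 0 → NU1 x := fun x hx => Or.inl (hnu x hx)
  -- Q * Q ~ Q
  have hQQ : HRel H (Q * Q) Q := by
    have h1 : HRel H (b * b) (Q * Q) :=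
      hrel_trans H (hrel_mul_right H hbQ b)
        (by
          have := hrel_mul_right H hbQ Q
          rwa [mul_comm b Q] at this)
    exact hrel_trans H (hrel_trans H (hrel_symm H h1) hbid) hbQ
  -- choose a ∈ H with v a ≠ 0
  obtain ⟨k, hk⟩ : ∃ k : ℕ, k ∉ ({j : ℕ | ∀ a ∈ H, Multiplicative.toAdd a.2 p ≠ j} ∪ {0}) :=
    Set.Infinite.nonempty (Set.Finite.infinite_compl
      ((hdense p).union (Set.finite_singleton 0)))
  simp only [Set.mem_union, Set.mem_setOf_eq, Set.mem_singleton_iff, not_or] at hk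
  obtain ⟨hk1, hk0⟩ := hk
  push_neg at hk1
  obtain ⟨a, haH, hak⟩ := hk1
  have hva : v a ≠ 0 := by simpa [hvdef, hak] using hk0
  -- powers of a are nonunits
  have hvapow : ∀ j : ℕ, 1 ≤ j → v (a ^ j) ≠ 0 := by
    intro j hj
    rw [hvpow]
    intro h
    rcases Nat.mul_eq_zero.mp h with h' | h'
    · omega
    · exact hva h'
  have hnupow : ∀ j : ℕ, 1 ≤ j → NU1 (a ^ j) := fun j hj => hnu1 _ (hvapow j hj)
  -- pigeonhole: some power of a has idempotent class
  obtain ⟨n, f, hf⟩ := hfin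
  have hchoice : ∀ j : Fin (n + 1), ∃ i : Fin n, HRel H (a ^ (j.1 + 1)) (f i) :=
    fun j => hf _ (hnupow (j.1 + 1) (by omega))
  obtain ⟨j1, j2, hjne, hjeq⟩ :=
    Fintype.exists_ne_map_eq_of_card_lt (fun j : Fin (n + 1) => (hchoice j).choose)
      (by simp)
  have hrel12 : HRel H (a ^ (j1.1 + 1)) (a ^ (j2.1 + 1)) := by
    have h1 := (hchoice j1).choose_spec
    have h2 := (hchoice j2).choose_spec
    rw [hjeq] at h1
    exact hrel_trans H h1 (hrel_symm H h2)
  -- wlog j1 < j2, get i, d with a^i ~ a^(i+d)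
  obtain ⟨i, d, hi1, hd1, hper⟩ :
      ∃ i d : ℕ, 1 ≤ i ∧ 1 ≤ d ∧ HRel H (a ^ i) (a ^ (i + d)) := by
    have hne' : j1.1 ≠ j2.1 := fun h => hjne (Fin.ext h)
    rcases lt_or_gt_of_ne hne' with hlt | hgt
    · refine ⟨j1.1 + 1, j2.1 - j1.1, by omega, by omega, ?_⟩
      have e : j2.1 + 1 = j1.1 + 1 + (j2.1 - j1.1) := by omega
      rw [e] at hrel12
      exact hrel12
    · refine ⟨j2.1 + 1, j1.1 - j2.1, by omega, by omega, ?_⟩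
      have e : j1.1 + 1 = j2.1 + 1 + (j1.1 - j2.1) := by omega
      rw [e] at hrel12
      exact hrel_symm H hrel12
  set m : ℕ := i * d with hmdef
  have him : i ≤ m := Nat.le_mul_of_pos_right i hd1
  have hm1 : 1 ≤ m := le_trans hi1 him
  -- a^m is idempotent
  have hidem : HRel H (a ^ m * a ^ m) (a ^ m) := by
    have h1 : HRel H (a ^ i) (a ^ (i + m)) := by
      have := hrel_pow_period H a i d hper i
      rwa [← hmdef] at this
    have h2 : HRel H (a ^ i * a ^ (m - i)) (a ^ (i + m) * a ^ (m - i)) :=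
      hrel_mul_right H h1 (a ^ (m - i))
    rw [← pow_add, ← pow_add] at h2
    have e1 : i + (m - i) = m := by omega
    have e2 : i + m + (m - i) = m + m := by omega
    rw [e1, e2, pow_add] at h2
    exact hrel_symm H h2
  have hnum : NU1 (a ^ m) := hnupow m hm1
  -- b * a^m ~ b
  have h1 : HRel H (b * a ^ m) b := hbmin _ hnum hidem
  -- Q * a^m ~ a^m  (peel off one Q from a^m)
  have h3 : HRel H (Q * a ^ m) (a ^ m) := by
    set g : P →₀ ℕ := Multiplicative.toAdd (a ^ m).2 with hgdef
    have hgp : 1 ≤ g p := Nat.one_le_iff_ne_zero.mpr (hvapow m hm1)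
    set s : FM Fu P := ((a ^ m).1, Multiplicative.ofAdd (g - Finsupp.single p 1)) with hsdef
    have hx : s * Q = a ^ m := by
      apply Prod.ext
      · simp [hsdef, hQdef, primeElt]
      · show Multiplicative.ofAdd (g - Finsupp.single p 1) *
            Multiplicative.ofAdd (Finsupp.single p 1) = (a ^ m).2
        rw [← ofAdd_add, tsub_add_cancel_of_le (Finsupp.single_le_iff.mpr hgp)]
        simp [hgdef]
    have h4 : HRel H (Q * Q * s) (Q * s) := hrel_mul_right H hQQ s
    have e1 : Q * (s * Q) = Q * Q * s := by
      rw [mul_comm s Q, ← mul_assoc]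
    have e2 : s * Q = Q * s := mul_comm s Q
    rw [← hx, e1, e2]
    exact h4
  -- b * a^m ~ Q * a^m
  have h2 : HRel H (b * a ^ m) (Q * a ^ m) := hrel_mul_right H hbQ (a ^ m)
  refine ⟨a ^ m, pow_mem haH m, ?_⟩
  exact hrel_trans H (hrel_symm H h3) (hrel_trans H (hrel_symm H h2) h1)
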